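/- In the setting of g₂ = (sp(1)₃ ⊕ sp(1)₁) ⊕ ℍ² with [e₁,e₂] = λE₊ (λ ≠ 0), and with s ∈ g₂ an element acting on ℍ² as right multiplication by i ∈ Im ℍ, define X_n := E₀ − 3s − (2/(λn)) e₂ and Y_n := E₋ + n e₁. Then [E₀ − 3s, e₁] = 0 and [X_n, Y_n] = (2/(λn)) E₋ e₂, so [X_n,Y_n] → 0 as n → ∞ while the component E₀ ∧ E₋ of X_n ∧ Y_n in sp(1)₃ is nonzero and constant. -/

import Mathlib

open scoped Quaternion

noncomputable section

/-- The quaternion units. -/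
def qi : ℍ[ℝ] := ⟨0, 1, 0, 0⟩
def qj : ℍ[ℝ] := ⟨0, 0, 1, 0⟩
def qk : ℍ[ℝ] := ⟨0, 0, 0, 1⟩

/-- `E₀ = diag(3i, i)` acting on `ℍ²` by left multiplication. -/
def mE0 (v : Fin 2 → ℍ[ℝ]) : Fin 2 → ℍ[ℝ] := ![3 * (qi * v 0), qi * v 1]

/-- `E₊ = [[0,√3],[-√3,2j]]` acting on `ℍ²` by left multiplication. -/
def mEp (v : Fin 2 → ℍ[ℝ]) : Fin 2 → ℍ[ℝ] :=
  ![(Real.sqrt 3 : ℝ) • v 1, -((Real.sqrt 3 : ℝ) • v 0) + 2 * (qj * v 1)]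

/-- `E₋ = [[0,√3 i],[√3 i,2k]]` acting on `ℍ²` by left multiplication. -/
def mEm (v : Fin 2 → ℍ[ℝ]) : Fin 2 → ℍ[ℝ] :=
  ![(Real.sqrt 3 : ℝ) • (qi * v 1), (Real.sqrt 3 : ℝ) • (qi * v 0) + 2 * (qk * v 1)]

/-- The standard basis of `ℍ²`. -/
def e1v : Fin 2 → ℍ[ℝ] := ![1, 0]
def e2v : Fin 2 → ℍ[ℝ] := ![0, 1]

open Filter Topology


/-! The `sp(1)₃`-part of `Xₙ` kills `e₁`, because on `e₁` the matrix `E₀ = diag(3i, i)` acts as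
right multiplication by `3i`, i.e. as `3s`. Expanding `[Xₙ, Yₙ]` bilinearly, the term `-2E₊` coming
from `[E₀, E₋]` is cancelled by `-(2/(λn))·n·[e₂, e₁] = 2E₊`, leaving `(2/(λn))·E₋e₂`, which tends to
zero. Linear independence of `E₀, E₋` is detected by bracketing with `e₁`, which sends them to the
independent vectors `(3i, 0)` and `(0, √3 i)` of `ℍ²`. -/

theorem LinearIndependent.of_lie_pair {R L M : Type*} [CommRing R] [LieRing L] [LieAlgebra R L]
    [AddCommGroup M] [Module R M] [LieRingModule L M] [LieModule R L M] {a b : L} (m : M)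
    (h : LinearIndependent R ![⁅a, m⁆, ⁅b, m⁆]) : LinearIndependent R ![a, b] := by
  rw [LinearIndependent.pair_iff] at h ⊢
  intro s t hst
  exact h s t (by rw [← smul_lie, ← smul_lie, ← add_lie, hst, zero_lie])

theorem lie_sub_smul_add_smul {R L : Type*} [CommRing R] [LieRing L] [LieAlgebra R L]
    (A B u v : L) (c n : R) :
    ⁅A - c • u, B + n • v⁆ = ⁅A, B⁆ + n • ⁅A, v⁆ - c • ⁅u, B⁆ - (c * n) • ⁅u, v⁆ := by
  simp only [lie_add, sub_lie, smul_lie, lie_smul]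
  module

theorem tendsto_sqrt_bilinForm_smul_self {α M : Type*} [AddCommGroup M] [Module ℝ M]
    (Q : LinearMap.BilinForm ℝ M) (w : M) {l : Filter α} {c : α → ℝ}
    (hc : Tendsto c l (𝓝 0)) : Tendsto (fun a => √(Q (c a • w) (c a • w))) l (𝓝 0) := by
  have hsqrt : ∀ a, √(Q (c a • w) (c a • w)) = |c a| * √(Q w w) := fun a => by
    have hQ : Q (c a • w) (c a • w) = c a ^ 2 * Q w w := by
      simp only [map_smul, LinearMap.smul_apply, smul_eq_mul]
      ring
    rw [hQ, Real.sqrt_mul (sq_nonneg _), Real.sqrt_sq_eq_abs]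
  simpa only [hsqrt, abs_zero, zero_mul] using hc.abs.mul_const (√(Q w w))

theorem mE0_e1v : mE0 e1v = (3 : ℝ) • fun l => e1v l * qi := by
  funext l
  fin_cases l <;> simp [mE0, e1v, ofNat_smul_eq_nsmul, nsmul_eq_mul]

theorem linearIndependent_mE0_mEm_e1v : LinearIndependent ℝ ![mE0 e1v, mEm e1v] := by
  have hqi : qi ≠ 0 := fun h => by simpa [qi] using congrArg QuaternionAlgebra.imI h
  rw [mE0_e1v, LinearIndependent.pair_iff]
  intro a b hab
  have h0 := congrFun hab 0
  have h1 := congrFun hab 1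
  simp [mEm, e1v, hqi] at h0 h1
  exact ⟨h0, h1⟩

section Brackets

variable {g : Type*} [LieRing g] [LieAlgebra ℝ g] {E0g Epg Emg s : g}
  {ι : (Fin 2 → ℍ[ℝ]) →ₗ[ℝ] g}

theorem lie_E0_sub_three_smul_e1v (hE0 : ∀ v, ⁅E0g, ι v⁆ = ι (mE0 v))
    (hs : ∀ v, ⁅s, ι v⁆ = ι fun l => v l * qi) : ⁅E0g - (3 : ℝ) • s, ι e1v⁆ = 0 := by
  rw [sub_lie, smul_lie, hE0, hs, mE0_e1v, map_smul, sub_self]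

theorem lie_E0_sub_smul_e2v_Em_add_smul_e1v (hb2 : ⁅E0g, Emg⁆ = -((2 : ℝ) • Epg))
    (hE0 : ∀ v, ⁅E0g, ι v⁆ = ι (mE0 v)) (hEm : ∀ v, ⁅Emg, ι v⁆ = ι (mEm v))
    (hs : ∀ v, ⁅s, ι v⁆ = ι fun l => v l * qi)
    (hsEm : ⁅s, Emg⁆ = 0) {lam : ℝ} (hlam : lam ≠ 0) (hbr : ⁅ι e1v, ι e2v⁆ = lam • Epg)
    {n : ℝ} (hn : n ≠ 0) :
    ⁅E0g - (3 : ℝ) • s - (2 / (lam * n)) • ι e2v, Emg + n • ι e1v⁆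
      = (2 / (lam * n)) • ι (mEm e2v) := by
  have hE0s : ⁅E0g - (3 : ℝ) • s, Emg⁆ = -((2 : ℝ) • Epg) := by
    rw [sub_lie, smul_lie, hb2, hsEm, smul_zero, sub_zero]
  have he2Em : ⁅ι e2v, Emg⁆ = -ι (mEm e2v) := by rw [← lie_skew, hEm]
  have he2e1 : ⁅ι e2v, ι e1v⁆ = -(lam • Epg) := by rw [← lie_skew, hbr]
  have hscalar : 2 / (lam * n) * n * lam = 2 := by field_simp
  rw [lie_sub_smul_add_smul, hE0s, lie_E0_sub_three_smul_e1v hE0 hs, he2Em, he2e1]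
  simp only [smul_neg, smul_smul, hscalar, smul_zero, add_zero, sub_neg_eq_add]
  abel

end Brackets

theorem stmt18_general (g : Type*) [LieRing g] [LieAlgebra ℝ g]
    (Q : LinearMap.BilinForm ℝ g)
    (E0g Epg Emg s : g) (ι : (Fin 2 → ℍ[ℝ]) →ₗ[ℝ] g) (hι : Function.Injective ι)
    -- bracket relations in sp(1)₃
    (hb2 : ⁅E0g, Emg⁆ = -((2 : ℝ) • Epg))
    -- sp(1)₃ acts on ℍ² by left multiplication by the matrices E₀, E₊, E₋
    (hE0 : ∀ v, ⁅E0g, ι v⁆ = ι (mE0 v))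
    (hEm : ∀ v, ⁅Emg, ι v⁆ = ι (mEm v))
    -- `s ∈ sp(1)₁` acts by right multiplication by `i` and commutes with sp(1)₃
    (hs : ∀ v, ⁅s, ι v⁆ = ι fun l => v l * qi)
    (hsEm : ⁅s, Emg⁆ = 0)
    -- `[e₁, e₂] = λ·E₊` with `λ ≠ 0`
    (lam : ℝ) (hlam : lam ≠ 0) (hbr : ⁅ι e1v, ι e2v⁆ = lam • Epg) :
    let X : ℕ → g := fun n => E0g - (3 : ℝ) • s - (2 / (lam * n)) • ι e2v
    let Y : ℕ → g := fun n => Emg + (n : ℝ) • ι e1v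
    ⁅E0g - (3 : ℝ) • s, ι e1v⁆ = 0 ∧
    (∀ n : ℕ, 1 ≤ n → ⁅X n, Y n⁆ = (2 / (lam * n)) • ι (mEm e2v)) ∧
    Tendsto (fun n : ℕ => Real.sqrt (Q ⁅X n, Y n⁆ ⁅X n, Y n⁆)) atTop (𝓝 0) ∧
    LinearIndependent ℝ ![E0g, Emg] := by
  intro X Y
  have hXY : ∀ n : ℕ, 1 ≤ n → ⁅X n, Y n⁆ = (2 / (lam * n)) • ι (mEm e2v) := fun n hn =>
    lie_E0_sub_smul_e2v_Em_add_smul_e1v hb2 hE0 hEm hs hsEm hlam hbr (by positivity)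
  refine ⟨lie_E0_sub_three_smul_e1v hE0 hs, hXY, ?_, ?_⟩
  · have hc : Tendsto (fun n : ℕ => 2 / (lam * n)) atTop (𝓝 0) := by
      simpa only [div_div] using
        (tendsto_const_nhds (x := 2 / lam)).div_atTop tendsto_natCast_atTop_atTop
    refine (tendsto_sqrt_bilinForm_smul_self Q (ι (mEm e2v)) hc).congr' ?_
    filter_upwards [eventually_ge_atTop 1] with n hn
    rw [hXY n hn]
  · refine LinearIndependent.of_lie_pair (ι e1v) ?_
    have h := linearIndependent_mE0_mEm_e1v.map' ι (LinearMap.ker_eq_bot.2 hι)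
    rw [← FinVec.map_eq] at h
    rwa [hE0, hEm]

/-- In the setting `g₂ = (sp(1)₃ ⊕ sp(1)₁) ⊕ ℍ²` with
`[ι e₁, ι e₂] = λ·E₊` (`λ ≠ 0`) and `s ∈ sp(1)₁` acting on `ℍ²` by right multiplication
by `i`, set `Xₙ := E₀ - 3s - (2/(λn))·e₂` and `Yₙ := E₋ + n·e₁`.  Then
`[E₀ - 3s, e₁] = 0` and `[Xₙ, Yₙ] = (2/(λn))·(E₋ e₂)`, so `[Xₙ,Yₙ] → 0` as `n → ∞`
(in the `Q`-norm), while the wedge `E₀ ∧ E₋` of the `sp(1)₃`-components is nonzero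
(`E₀, E₋` are linearly independent) and constant. -/
theorem stmt18 (g : Type*) [LieRing g] [LieAlgebra ℝ g]
    (Q : LinearMap.BilinForm ℝ g)
    (hQsymm : ∀ x y : g, Q x y = Q y x)
    (hQpos : ∀ x : g, x ≠ 0 → 0 < Q x x)
    (hQad : ∀ a x y : g, Q a ⁅x, y⁆ = Q ⁅a, x⁆ y)
    (E0g Epg Emg s : g) (ι : (Fin 2 → ℍ[ℝ]) →ₗ[ℝ] g) (hι : Function.Injective ι)
    -- bracket relations in sp(1)₃
    (hb1 : ⁅E0g, Epg⁆ = (2 : ℝ) • Emg)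
    (hb2 : ⁅E0g, Emg⁆ = -((2 : ℝ) • Epg))
    (hb3 : ⁅Epg, Emg⁆ = (2 : ℝ) • E0g)
    -- sp(1)₃ acts on ℍ² by left multiplication by the matrices E₀, E₊, E₋
    (hE0 : ∀ v, ⁅E0g, ι v⁆ = ι (mE0 v))
    (hEp : ∀ v, ⁅Epg, ι v⁆ = ι (mEp v))
    (hEm : ∀ v, ⁅Emg, ι v⁆ = ι (mEm v))
    -- `s ∈ sp(1)₁` acts by right multiplication by `i` and commutes with sp(1)₃
    (hs : ∀ v, ⁅s, ι v⁆ = ι fun l => v l * qi)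
    (hsE0 : ⁅s, E0g⁆ = 0) (hsEp : ⁅s, Epg⁆ = 0) (hsEm : ⁅s, Emg⁆ = 0)
    -- `[e₁, e₂] = λ·E₊` with `λ ≠ 0`
    (lam : ℝ) (hlam : lam ≠ 0) (hbr : ⁅ι e1v, ι e2v⁆ = lam • Epg) :
    let X : ℕ → g := fun n => E0g - (3 : ℝ) • s - (2 / (lam * n)) • ι e2v
    let Y : ℕ → g := fun n => Emg + (n : ℝ) • ι e1v
    ⁅E0g - (3 : ℝ) • s, ι e1v⁆ = 0 ∧
    (∀ n : ℕ, 1 ≤ n → ⁅X n, Y n⁆ = (2 / (lam * n)) • ι (mEm e2v)) ∧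
    Tendsto (fun n : ℕ => Real.sqrt (Q ⁅X n, Y n⁆ ⁅X n, Y n⁆)) atTop (𝓝 0) ∧
    LinearIndependent ℝ ![E0g, Emg] :=
  stmt18_general g Q E0g Epg Emg s ι hι hb2 hE0 hEm hs hsEm lam hlam hbr

end
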